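/- There exists a unit η ∈ 𝓞_H^× with τ(η) = η such that ∏_{g∈T} g(η) = 1 and such that the kernel of the group homomorphism ℤ^T → 𝓞_H^× sending a family (a_g)_{g∈T} of integers to ∏_{g∈T} g(η)^{a_g} is exactly the subgroup ℤ·(1,…,1) of constant families. In particular, the subgroup of 𝓞_H^× generated by {g(η) : g ∈ T} is free abelian of rank [H:ℚ]/2 − 1, which is the rank of 𝓞_H^× (the maximal possible). -/

import Mathlib

/-!
Dirichlet's unit theorem gives a unit `ε` with `log w(ε) < 0` at every infinite place `w` other
than the place `v₀` of `ι`. Put `η = (ε · τε)²`; it is fixed by `τ`, and its conjugates over `T`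
multiply to `N(ε)² = 1`. The stabiliser of `v₀` in `Gal(H/ℚ)` is `{1, τ}`, so for `s ∈ T` the place
`v₀ ∘ s⁻¹` satisfies `log |tη| < 0` for every `t ∈ T` other than `s`. If `∏ (tη)^{a_t} = 1`, take
logarithms at `v₀ ∘ s⁻¹` for an `s` where `a` is maximal: `∑ (a_s - a_t) log |tη| = 0` is a sum
of non-positive terms, so `a` is constant. Dropping one element of `T` then leaves a free family.
-/

open NumberField

/-- The action of a `ℚ`-automorphism of a number field `H` on the units of its
ring of integers. -/
noncomputable def galU (H : Type*) [Field H] [NumberField H] (g : H ≃ₐ[ℚ] H) :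
    (𝓞 H)ˣ ≃* (𝓞 H)ˣ :=
  Units.mapEquiv (galRestrict ℤ ℚ H (𝓞 H) g).toRingEquiv.toMulEquiv

open Finset

section CosetReps

variable {G : Type*} [Group G]

def IsLeftCosetReps (τ : G) (T : Finset G) : Prop :=
  ∀ g : G, ∃! t, t ∈ T ∧ (t = g ∨ t = g * τ)

namespace IsLeftCosetReps

variable {τ : G} {T : Finset G}

theorem eq_of_mem (hT : IsLeftCosetReps τ T) {s t : G} (hs : s ∈ T) (ht : t ∈ T)
    (h : t = s ∨ t = s * τ) : t = s :=
  (hT s).unique ⟨ht, h⟩ ⟨hs, Or.inl rfl⟩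

variable [DecidableEq G]

theorem disjoint_image_mul_right (hT : IsLeftCosetReps τ T) (hτ1 : τ ≠ 1) :
    Disjoint T (T.image (· * τ)) := by
  rw [disjoint_left]
  intro x ht hx
  obtain ⟨s, hs, rfl⟩ := mem_image.mp hx
  have hst : s * τ = s := hT.eq_of_mem hs ht (Or.inr rfl)
  exact hτ1 (mul_eq_left.mp hst)

variable [Fintype G]

theorem union_image_mul_right (hT : IsLeftCosetReps τ T) (hτ2 : τ * τ = 1) :
    T ∪ T.image (· * τ) = univ := by
  refine eq_univ_of_forall fun g => ?_
  obtain ⟨t, ⟨ht, rfl | rfl⟩, -⟩ := hT g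
  · exact mem_union_left _ ht
  · exact mem_union_right _ (mem_image.mpr ⟨g * τ, ht, by rw [mul_assoc, hτ2, mul_one]⟩)

theorem two_mul_card (hT : IsLeftCosetReps τ T) (hτ2 : τ * τ = 1) (hτ1 : τ ≠ 1) :
    2 * #T = Fintype.card G := by
  rw [← card_univ, ← hT.union_image_mul_right hτ2,
    card_union_of_disjoint (hT.disjoint_image_mul_right hτ1),
    card_image_of_injective _ (mul_left_injective τ), two_mul]

theorem prod_univ {M : Type*} [CommMonoid M] (hT : IsLeftCosetReps τ T) (hτ2 : τ * τ = 1)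
    (hτ1 : τ ≠ 1) (f : G → M) : ∏ g, f g = ∏ t ∈ T, f t * f (t * τ) := by
  rw [← hT.union_image_mul_right hτ2, prod_union (hT.disjoint_image_mul_right hτ1),
    prod_image fun a _ b _ h => mul_left_injective τ h, prod_mul_distrib]

end IsLeftCosetReps

end CosetReps

section FreeAbelian

variable {G : Type*} [CommGroup G]

theorem nonempty_closure_range_mulEquiv {ι : Type*} [Fintype ι] (v : ι → G)
    (hv : ∀ a : ι → ℤ, ∏ i, v i ^ a i = 1 → a = 0) :
    Nonempty (Subgroup.closure (Set.range v) ≃* Multiplicative (ι → ℤ)) := by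
  classical
  let Φ : Multiplicative (ι → ℤ) →* G :=
    { toFun := fun a => ∏ i, v i ^ a.toAdd i
      map_one' := by simp
      map_mul' := fun a b => by simp [zpow_add, prod_mul_distrib] }
  have hΦ : Function.Injective Φ :=
    (injective_iff_map_eq_one Φ).mpr fun a ha => congrArg Multiplicative.ofAdd (hv _ ha)
  have hrange : Φ.range = Subgroup.closure (Set.range v) := by
    apply le_antisymm
    · rintro _ ⟨a, rfl⟩
      exact Subgroup.prod_mem _ fun i _ =>
        Subgroup.zpow_mem _ (Subgroup.subset_closure (Set.mem_range_self i)) _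
    · rw [Subgroup.closure_le]
      rintro _ ⟨i, rfl⟩
      refine ⟨Multiplicative.ofAdd (Pi.single i 1), ?_⟩
      simp [Φ, Pi.single_apply]
  exact ⟨(MulEquiv.subgroupCongr hrange.symm).trans (MonoidHom.ofInjective hΦ).symm⟩

theorem nonempty_closure_mulEquiv_of_ker_eq_const {ι : Type*} [DecidableEq ι] (T : Finset ι)
    (u : ι → G) {t₀ : ι} (ht₀ : t₀ ∈ T)
    (hker : ∀ a : ι → ℤ, ∏ g ∈ T, u g ^ a g = 1 ↔ ∃ c : ℤ, ∀ g ∈ T, a g = c) :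
    Nonempty (Subgroup.closure {x | ∃ g ∈ T, x = u g} ≃* Multiplicative (Fin (#T - 1) → ℤ)) := by
  set T' := T.erase t₀
  have hfree : ∀ a : T' → ℤ, ∏ i : T', u i ^ a i = 1 → a = 0 := by
    intro a ha
    set a' := Function.extend ((↑) : T' → ι) a 0
    have ha'_coe (i : T') : a' i = a i := Subtype.val_injective.extend_apply _ _ i
    have ha'_t₀ : a' t₀ = 0 :=
      Function.extend_apply' _ _ _ fun ⟨i, hi⟩ => (mem_erase.mp i.2).1 hi
    obtain ⟨c, hc⟩ := (hker a').mp <| by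
      rw [← mul_prod_erase T _ ht₀, ha'_t₀, zpow_zero, one_mul, ← prod_coe_sort]
      simpa only [ha'_coe] using ha
    funext i
    rw [Pi.zero_apply, ← ha'_coe, hc _ (mem_of_mem_erase i.2), ← hc t₀ ht₀, ha'_t₀]
  have hprod : u t₀ * ∏ t ∈ T', u t = 1 := by
    rw [mul_prod_erase T u ht₀]
    simpa using (hker 1).mpr ⟨1, fun _ _ => rfl⟩
  have hclosure : Subgroup.closure {x | ∃ g ∈ T, x = u g} =
      Subgroup.closure (Set.range fun i : T' => u i) := by
    apply le_antisymm
    · rw [Subgroup.closure_le]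
      rintro _ ⟨g, hg, rfl⟩
      obtain rfl | hne := eq_or_ne g t₀
      · rw [eq_inv_of_mul_eq_one_left hprod, ← prod_coe_sort]
        exact Subgroup.inv_mem _ (Subgroup.prod_mem _ fun i _ => Subgroup.subset_closure ⟨i, rfl⟩)
      · exact Subgroup.subset_closure ⟨⟨g, mem_erase.mpr ⟨hne, hg⟩⟩, rfl⟩
    · exact Subgroup.closure_mono fun _ ⟨i, hi⟩ => ⟨i, mem_of_mem_erase i.2, hi.symm⟩
  obtain ⟨φ⟩ := nonempty_closure_range_mulEquiv _ hfree
  have e : T' ≃ Fin (#T - 1) := T'.equivFinOfCardEq (card_erase_of_mem ht₀)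
  exact ⟨((MulEquiv.subgroupCongr hclosure).trans φ).trans
    (AddEquiv.toMultiplicative (LinearEquiv.funCongrLeft ℤ ℤ e.symm).toAddEquiv)⟩

end FreeAbelian

theorem eq_of_sum_mul_eq_zero_of_neg {ι : Type*} {T : Finset ι} {x a : ι → ℝ} {s : ι}
    (hmax : ∀ t ∈ T, a t ≤ a s) (hneg : ∀ t ∈ T, t ≠ s → x t < 0)
    (hx : ∑ t ∈ T, x t = 0) (hax : ∑ t ∈ T, a t * x t = 0) {t : ι} (ht : t ∈ T) :
    a t = a s := by
  have hsum : ∑ t ∈ T, (a s - a t) * x t = 0 := by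
    simp only [sub_mul, sum_sub_distrib, ← mul_sum, hx, hax, mul_zero, sub_zero]
  have hterm : ∀ t ∈ T, (a s - a t) * x t ≤ 0 := fun t ht => by
    obtain rfl | hne := eq_or_ne t s
    · simp
    · exact mul_nonpos_of_nonneg_of_nonpos (sub_nonneg.mpr (hmax t ht)) (hneg t ht hne).le
  obtain rfl | hne := eq_or_ne t s
  · rfl
  · have := (sum_eq_zero_iff_of_nonpos hterm).mp hsum t ht
    rcases mul_eq_zero.mp this with h | h
    · linarith
    · exact absurd h (hneg t ht hne).ne

namespace NumberField

variable {H : Type*} [Field H]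

theorem Units.coe_prod {κ : Type*} (s : Finset κ) (u : κ → (𝓞 H)ˣ) :
    ((∏ i ∈ s, u i : (𝓞 H)ˣ) : H) = ∏ i ∈ s, (u i : H) :=
  map_prod ((algebraMap (𝓞 H) H).toMonoidHom.comp (Units.coeHom (𝓞 H))) u s

theorem log_apply_prod_zpow (w : InfinitePlace H) {κ : Type*} (s : Finset κ)
    (u : κ → (𝓞 H)ˣ) (a : κ → ℤ) :
    Real.log (w (∏ i ∈ s, u i ^ a i : (𝓞 H)ˣ)) = ∑ i ∈ s, a i * Real.log (w (u i)) := by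
  rw [Units.coe_prod, map_prod, Real.log_prod fun i _ => (Units.pos_at_place _ w).ne']
  simp only [Units.coe_zpow, map_zpow₀, Real.log_zpow]

theorem prod_zpow_eq_one_iff_of_log_neg {κ : Type*} (T : Finset κ) (u : κ → (𝓞 H)ˣ)
    (w : κ → InfinitePlace H) (hprod : ∏ t ∈ T, u t = 1)
    (hneg : ∀ s ∈ T, ∀ t ∈ T, t ≠ s → Real.log (w s (u t)) < 0) (a : κ → ℤ) :
    ∏ t ∈ T, u t ^ a t = 1 ↔ ∃ c : ℤ, ∀ t ∈ T, a t = c := by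
  constructor
  · intro h
    obtain rfl | hT := T.eq_empty_or_nonempty
    · exact ⟨0, by simp⟩
    obtain ⟨s, hs, hmax⟩ := T.exists_max_image a hT
    have hlog (b : κ → ℤ) (hb : ∏ t ∈ T, u t ^ b t = 1) :
        ∑ t ∈ T, (b t : ℝ) * Real.log (w s (u t)) = 0 := by
      rw [← log_apply_prod_zpow, hb, Units.coe_one, map_one, Real.log_one]
    refine ⟨a s, fun t ht => ?_⟩
    have := eq_of_sum_mul_eq_zero_of_neg (x := fun t => Real.log (w s (u t)))
      (a := fun t => (a t : ℝ)) (fun t ht => by exact_mod_cast hmax t ht) (hneg s hs)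
      (by simpa using hlog 1 (by simpa using hprod)) (hlog a h) ht
    exact_mod_cast this
  · rintro ⟨c, hc⟩
    rw [prod_congr rfl fun t ht => by rw [hc t ht], prod_zpow, hprod, one_zpow]

variable [NumberField H]

theorem coe_galU_apply (g : H ≃ₐ[ℚ] H) (u : (𝓞 H)ˣ) : ((galU H g u : (𝓞 H)ˣ) : H) = g u :=
  algebraMap_galRestrict_apply ℤ g (u : 𝓞 H)

theorem galU_mul_apply (g h : H ≃ₐ[ℚ] H) (u : (𝓞 H)ˣ) :
    galU H (g * h) u = galU H g (galU H h u) :=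
  Units.coe_injective H <| by simp only [coe_galU_apply, AlgEquiv.mul_apply]

theorem galU_one_apply (u : (𝓞 H)ˣ) : galU H 1 u = u :=
  Units.coe_injective H <| by simp only [coe_galU_apply, AlgEquiv.one_apply]

theorem prod_galU_sq_eq_one [IsGalois ℚ H] (u : (𝓞 H)ˣ) :
    (∏ g : H ≃ₐ[ℚ] H, galU H g u) ^ 2 = 1 := by
  apply Units.coe_injective H
  beta_reduce
  have hnorm : Algebra.norm ℚ (u : H) ^ 2 = 1 := by
    rw [← sq_abs, Units.norm, one_pow]
  simp only [Units.coe_pow, Units.coe_prod, coe_galU_apply, Units.coe_one]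
  rw [← Algebra.norm_eq_prod_automorphisms, ← map_pow, hnorm, map_one]

variable {ι : H →+* ℂ} {τ : H ≃ₐ[ℚ] H}

theorem mk_comp_eq_mk_iff (hιτ : ∀ x, ι (τ x) = starRingEnd ℂ (ι x)) (g : H ≃ₐ[ℚ] H) :
    InfinitePlace.mk (ι.comp (g : H →+* H)) = InfinitePlace.mk ι ↔ g = 1 ∨ g = τ := by
  have hcomp (h : H ≃ₐ[ℚ] H) : ι.comp (g : H →+* H) = ι.comp (h : H →+* H) ↔ g = h :=
    (RingHom.cancel_left ι.injective).trans
      ⟨fun e => AlgEquiv.ext (RingHom.congr_fun e), fun e => e ▸ rfl⟩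
  have hconj : ComplexEmbedding.conjugate ι = ι.comp (τ : H →+* H) := by
    ext x
    simp [hιτ]
  rw [InfinitePlace.mk_eq_iff, (ComplexEmbedding.involutive_conjugate H).eq_iff, hconj]
  exact or_congr (hcomp 1) (hcomp τ)

theorem log_mk_apply_neg (hιτ : ∀ x, ι (τ x) = starRingEnd ℂ (ι x)) {ε : (𝓞 H)ˣ}
    (hε : ∀ w, w ≠ InfinitePlace.mk ι → Real.log (w ε) < 0) {g : H ≃ₐ[ℚ] H}
    (hg1 : g ≠ 1) (hgτ : g ≠ τ) : Real.log (InfinitePlace.mk ι (g ε)) < 0 :=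
  hε (InfinitePlace.mk (ι.comp g)) fun h => ((mk_comp_eq_mk_iff hιτ g).mp h).elim hg1 hgτ

theorem log_comap_inv_apply_galU_neg (hιτ : ∀ x, ι (τ x) = starRingEnd ℂ (ι x))
    (hτ2 : τ * τ = 1) {ε : (𝓞 H)ˣ} (hε : ∀ w, w ≠ InfinitePlace.mk ι → Real.log (w ε) < 0)
    {s t : H ≃ₐ[ℚ] H} (hts : t ≠ s) (htsτ : t ≠ s * τ) :
    Real.log ((InfinitePlace.mk ι).comap ((s⁻¹ : H ≃ₐ[ℚ] H) : H →+* H)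
      (galU H t ((ε * galU H τ ε) ^ 2) : H)) < 0 := by
  have hne1 : s⁻¹ * t ≠ 1 := fun h => hts (inv_mul_eq_one.mp h).symm
  have hneτ : s⁻¹ * t ≠ τ := fun h => htsτ (inv_mul_eq_iff_eq_mul.mp h)
  have hneg₁ := log_mk_apply_neg hιτ hε hne1 hneτ
  have hneg₂ := log_mk_apply_neg hιτ hε (g := s⁻¹ * t * τ)
    (fun h => hneτ (by rw [← inv_eq_of_mul_eq_one_right hτ2]; exact eq_inv_of_mul_eq_one_left h))
    (fun h => hne1 (mul_eq_right.mp h))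
  simp only [AlgEquiv.mul_apply] at hneg₁ hneg₂
  rw [InfinitePlace.comap_apply, coe_galU_apply, Units.coe_pow, Units.coe_mul, coe_galU_apply]
  simp only [RingHom.coe_coe, map_pow, map_mul]
  rw [Real.log_pow, Real.log_mul (InfinitePlace.pos_iff.mpr (by simp)).ne'
    (InfinitePlace.pos_iff.mpr (by simp)).ne']
  push_cast
  linarith

theorem exists_conj_fixed_unit_log_neg [IsGalois ℚ H]
    (hιτ : ∀ x, ι (τ x) = starRingEnd ℂ (ι x)) (hτ2 : τ * τ = 1) (hτ1 : τ ≠ 1)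
    {T : Finset (H ≃ₐ[ℚ] H)} (hT : IsLeftCosetReps τ T) :
    ∃ η : (𝓞 H)ˣ, galU H τ η = η ∧ ∏ g ∈ T, galU H g η = 1 ∧
      ∀ s ∈ T, ∀ t ∈ T, t ≠ s →
        Real.log ((InfinitePlace.mk ι).comap ((s⁻¹ : H ≃ₐ[ℚ] H) : H →+* H) (galU H t η : H))
          < 0 := by
  classical
  obtain ⟨ε, hε⟩ := Units.dirichletUnitTheorem.exists_unit H (InfinitePlace.mk ι)
  have hττ (u : (𝓞 H)ˣ) : galU H τ (galU H τ u) = u := by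
    rw [← galU_mul_apply, hτ2, galU_one_apply]
  refine ⟨(ε * galU H τ ε) ^ 2, ?_, ?_, fun s hs t ht hts => ?_⟩
  · rw [map_pow, map_mul, hττ, mul_comm]
  · simp only [map_pow, map_mul, ← galU_mul_apply, prod_pow, ← hT.prod_univ hτ2 hτ1]
    exact prod_galU_sq_eq_one ε
  · exact log_comap_inv_apply_galU_neg hιτ hτ2 hε hts
      fun h => hts (hT.eq_of_mem hs ht (Or.inr h))

end NumberField

theorem stmt_0_general (H : Type*) [Field H] [NumberField H] [IsGalois ℚ H]
    (ι : H →+* ℂ) (τ : H ≃ₐ[ℚ] H)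
    (hιτ : ∀ x : H, ι (τ x) = starRingEnd ℂ (ι x))
    (hτ2 : τ * τ = 1) (hτ1 : τ ≠ 1)
    (T : Finset (H ≃ₐ[ℚ] H))
    (hT : ∀ g : H ≃ₐ[ℚ] H, ∃! t, t ∈ T ∧ (t = g ∨ t = g * τ)) :
    ∃ η : (𝓞 H)ˣ,
      galU H τ η = η ∧
      (∏ g ∈ T, galU H g η) = 1 ∧
      (∀ a : (H ≃ₐ[ℚ] H) → ℤ,
        (∏ g ∈ T, galU H g η ^ a g) = 1 ↔ ∃ c : ℤ, ∀ g ∈ T, a g = c) ∧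
      Nonempty ((Subgroup.closure {x : (𝓞 H)ˣ | ∃ g ∈ T, x = galU H g η}) ≃*
        Multiplicative (Fin (Module.finrank ℚ H / 2 - 1) → ℤ)) := by
  classical
  have hT' : IsLeftCosetReps τ T := hT
  obtain ⟨η, hτη, hprod, hneg⟩ := exists_conj_fixed_unit_log_neg hιτ hτ2 hτ1 hT'
  have hker := prod_zpow_eq_one_iff_of_log_neg T (fun g => galU H g η) _ hprod hneg
  have hcard : Module.finrank ℚ H / 2 = #T := by
    rw [← IsGalois.card_aut_eq_finrank, Nat.card_eq_fintype_card, ← hT'.two_mul_card hτ2 hτ1]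
    omega
  obtain ⟨t₀, ⟨ht₀, -⟩, -⟩ := hT 1
  refine ⟨η, hτη, hprod, hker, ?_⟩
  rw [hcard]
  exact nonempty_closure_mulEquiv_of_ker_eq_const T _ ht₀ hker

/-- Let `H` be a totally complex number field, Galois over `ℚ`, with
complex conjugation `τ` attached to a fixed embedding `ι : H → ℂ`, and let `T` be a set of
representatives of the left cosets of `{1, τ}` in `Gal(H/ℚ)`.  Then there exists a unit
`η ∈ 𝓞_H^×` fixed by `τ`, with `∏_{g ∈ T} g η = 1`, and such that the kernel of
`ℤ^T → 𝓞_H^×`, `(a_g) ↦ ∏ g(η)^(a_g)`, is exactly the subgroup of constant families.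
In particular the subgroup generated by the `g η`, `g ∈ T`, is free abelian of rank
`[H:ℚ]/2 - 1`. -/
theorem stmt_0 (H : Type*) [Field H] [NumberField H] [IsGalois ℚ H]
    (hH : (H →+* ℝ) → False)
    (ι : H →+* ℂ) (τ : H ≃ₐ[ℚ] H)
    (hιτ : ∀ x : H, ι (τ x) = starRingEnd ℂ (ι x))
    (hτ2 : τ * τ = 1) (hτ1 : τ ≠ 1)
    (T : Finset (H ≃ₐ[ℚ] H))
    (hT : ∀ g : H ≃ₐ[ℚ] H, ∃! t, t ∈ T ∧ (t = g ∨ t = g * τ)) :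
    ∃ η : (𝓞 H)ˣ,
      galU H τ η = η ∧
      (∏ g ∈ T, galU H g η) = 1 ∧
      (∀ a : (H ≃ₐ[ℚ] H) → ℤ,
        (∏ g ∈ T, galU H g η ^ a g) = 1 ↔ ∃ c : ℤ, ∀ g ∈ T, a g = c) ∧
      Nonempty ((Subgroup.closure {x : (𝓞 H)ˣ | ∃ g ∈ T, x = galU H g η}) ≃*
        Multiplicative (Fin (Module.finrank ℚ H / 2 - 1) → ℤ)) :=
  stmt_0_general H ι τ hιτ hτ2 hτ1 T hT
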